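/- arXiv:2312.11702 — 4 statements merged into one kernel-verified Lean document; each statement's English description precedes it below -/
import Mathlib

section
/- Let 1 ≤ n ≤ m be integers and A ∈ Mat_{n×m}(ℚ_p) with SN(A) = (λ_1,…,λ_n). Then for every 1 ≤ k ≤ n, the sum of the k smallest singular numbers satisfies λ_n + λ_{n−1} + … + λ_{n−k+1} = min over all C ∈ Mat_{k×n}(ℤ_p) and D ∈ Mat_{m×k}(ℤ_p) of val_p(det(C·A·D)), and this infimum is attained. (This is the variational/min characterization of singular numbers; integral matrices C and D encode the rank-k projections and k-dimensional subspaces of the informal statement.) -/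
noncomputable section

/-- `p^a ∈ ℚ_p` for `a ∈ ℤ ∪ {∞}`, with the convention `p^∞ = 0`. -/
def qppow (p : ℕ) [Fact p.Prime] (a : WithTop ℤ) : ℚ_[p] :=
  if h : a = ⊤ then 0 else (p : ℚ_[p]) ^ (a.untop h)

/-- The rectangular `n × m` diagonal matrix whose `(i,i)` entry is `p^(f i)`. -/
def rectDiag (p : ℕ) [Fact p.Prime] (n m : ℕ) (f : ℕ → WithTop ℤ) :
    Matrix (Fin n) (Fin m) ℚ_[p] :=
  Matrix.of fun i j => if (i : ℕ) = (j : ℕ) then qppow p (f (i : ℕ)) else 0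

/-- `s` is the (weakly decreasing) tuple of singular numbers of the `n × m` matrix `A`
over `ℚ_p`: there are `U ∈ GL_n(ℤ_p)`, `V ∈ GL_m(ℤ_p)` with
`A = U · diag_{n×m}(p^{s₁},…) · V`. -/
def IsSN (p : ℕ) [Fact p.Prime] (n m : ℕ) (A : Matrix (Fin n) (Fin m) ℚ_[p])
    (s : Fin (min n m) → WithTop ℤ) : Prop :=
  Antitone s ∧ ∃ (U : (Matrix (Fin n) (Fin n) ℤ_[p])ˣ) (V : (Matrix (Fin m) (Fin m) ℤ_[p])ˣ),
    A = (U.val.map (fun x : ℤ_[p] => (x : ℚ_[p]))) *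
      rectDiag p n m (fun i => if h : i < min n m then s ⟨i, h⟩ else ⊤) *
      (V.val.map (fun x : ℤ_[p] => (x : ℚ_[p])))

open scoped Classical in
/-- The `p`-adic valuation `ℚ_p → ℤ ∪ {∞}`, with `val_p 0 = ∞`. -/
def padicValT (p : ℕ) [Fact p.Prime] (x : ℚ_[p]) : WithTop ℤ :=
  if x = 0 then ⊤ else (x.valuation : WithTop ℤ)


/-!
After multiplying `C` and `D` by the unimodular factors of the Smith normal form we may assume
`A = diag(p^{λ₁}, …, p^{λₙ})`. Expanding `det (C · A · D)` multilinearly in the rows of `C · A`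
(a Cauchy–Binet expansion), each term is an integral multiple of `∏ₐ p^{λ_{r a}}` for some
`r : Fin k → Fin n`, and vanishes unless `r` is injective; so its valuation is at least the sum
of the `k` smallest `λᵢ`. Selecting the last `k` rows and columns of the diagonal attains it.
-/

open Matrix PadicInt

section Valuation

variable {p : ℕ} [Fact p.Prime]

lemma padicValT_eq_addValuation : padicValT p = Padic.addValuation := by
  funext x
  by_cases hx : x = 0 <;> simp [padicValT, hx]

lemma padicValT_mul (x y : ℚ_[p]) :
    padicValT p (x * y) = padicValT p x + padicValT p y := by
  simp only [padicValT_eq_addValuation, AddValuation.map_mul]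

lemma padicValT_prod {ι : Type*} (t : Finset ι) (f : ι → ℚ_[p]) :
    padicValT p (∏ i ∈ t, f i) = ∑ i ∈ t, padicValT p (f i) := by
  classical
  induction t using Finset.induction with
  | empty => simp [padicValT_eq_addValuation]
  | insert i t hi ih => rw [Finset.prod_insert hi, Finset.sum_insert hi, padicValT_mul, ih]

lemma le_padicValT_sum {ι : Type*} {t : Finset ι} {f : ι → ℚ_[p]} {c : WithTop ℤ}
    (h : ∀ i ∈ t, c ≤ padicValT p (f i)) : c ≤ padicValT p (∑ i ∈ t, f i) := by
  rw [padicValT_eq_addValuation] at *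
  exact AddValuation.map_le_sum _ h

lemma padicValT_coe_nonneg (x : ℤ_[p]) : 0 ≤ padicValT p (x : ℚ_[p]) := by
  by_cases hx : (x : ℚ_[p]) = 0
  · simp [padicValT, hx]
  · rw [padicValT, if_neg hx]
    exact WithTop.coe_le_coe.2 valuation_coe_nonneg

lemma padicValT_qppow (a : WithTop ℤ) : padicValT p (qppow p a) = a := by
  induction a using WithTop.recTopCoe with
  | top => simp [qppow, padicValT]
  | coe a =>
    have hp : (p : ℚ_[p]) ≠ 0 := by exact_mod_cast (Fact.out : p.Prime).ne_zero
    simp [qppow, padicValT, zpow_ne_zero a hp, Padic.valuation_zpow]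

end Valuation

section SumOfSmallest

variable {M : Type*} [AddCommMonoid M] [PartialOrder M] [IsOrderedAddMonoid M]

lemma Antitone.sum_le_sum_of_card_eq {ι : Type*} [LinearOrder ι] {s : ι → M} (hs : Antitone s)
    {B T : Finset ι} (hcard : B.card = T.card) (b : ι) (hB : ∀ i ∈ B, b ≤ i)
    (hT : ∀ i ∈ T, i ∉ B → i ≤ b) :
    ∑ i ∈ B, s i ≤ ∑ i ∈ T, s i := by
  classical
  rw [← Finset.sum_inter_add_sum_sdiff B T, ← Finset.sum_inter_add_sum_sdiff T B,
    Finset.inter_comm T B]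
  refine add_le_add le_rfl ?_
  calc ∑ i ∈ B \ T, s i ≤ (B \ T).card • s b :=
        Finset.sum_le_card_nsmul _ _ _ fun i hi => hs (hB i (Finset.mem_sdiff.1 hi).1)
    _ = (T \ B).card • s b := by rw [Finset.card_sdiff_comm hcard]
    _ ≤ ∑ i ∈ T \ B, s i :=
        Finset.card_nsmul_le_sum _ _ _ fun i hi =>
          hs (hT i (Finset.mem_sdiff.1 hi).1 (Finset.mem_sdiff.1 hi).2)

lemma Antitone.sum_rev_castLE_le {n k : ℕ} (hkn : k ≤ n) {s : Fin n → M} (hs : Antitone s)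
    {r : Fin k → Fin n} (hr : Function.Injective r) :
    ∑ j, s (Fin.rev (Fin.castLE hkn j)) ≤ ∑ a, s (r a) := by
  cases k with
  | zero => simp
  | succ k =>
    let e : Fin (k + 1) ↪ Fin n := ⟨_, Fin.rev_injective.comp (Fin.castLE_injective hkn)⟩
    have he : ∀ j, (e j : ℕ) = n - 1 - j := fun j => by
      simp only [e, Function.Embedding.coeFn_mk, Function.comp_apply, Fin.val_rev,
        Fin.val_castLE]
      omega
    calc ∑ j, s (Fin.rev (Fin.castLE hkn j)) = ∑ i ∈ Finset.univ.map e, s i := by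
          rw [Finset.sum_map]; rfl
      _ ≤ ∑ i ∈ Finset.univ.map ⟨r, hr⟩, s i := ?_
      _ = ∑ a, s (r a) := by rw [Finset.sum_map]; rfl
    refine hs.sum_le_sum_of_card_eq (by simp) ⟨n - (k + 1), by omega⟩ ?_ fun i _ hi => ?_
    · intro i hi
      obtain ⟨j, -, rfl⟩ := Finset.mem_map.1 hi
      simp only [Fin.le_def, he]
      omega
    · by_contra hlt
      simp only [Fin.le_def, not_le] at hlt
      exact hi (Finset.mem_map.2 ⟨⟨n - 1 - i, by omega⟩, Finset.mem_univ _,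
        Fin.ext (by rw [he, Fin.val_mk]; omega)⟩)

end SumOfSmallest

section DetExpansion

variable {R : Type*} [CommRing R] {k n : Type*} [Fintype k] [DecidableEq k] [Fintype n]

theorem Matrix.det_mul_eq_sum_prod_mul_det_submatrix (X : Matrix k n R) (Y : Matrix n k R) :
    (X * Y).det = ∑ r : k → n, (∏ a, X a (r a)) * (Y.submatrix r id).det := by
  have hrows : X * Y = fun a => ∑ i, X a i • Y i := by
    ext a b
    simp [mul_apply, Finset.sum_apply]
  have hsum := (detRowAlternating (R := R) (n := k)).toMultilinearMap.map_sum
    fun a i => X a i • Y i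
  change detRowAlternating (X * Y) = _
  rw [hrows, ← AlternatingMap.coe_multilinearMap, hsum]
  refine Finset.sum_congr rfl fun r _ => ?_
  exact (detRowAlternating (R := R) (n := k)).toMultilinearMap.map_smul_univ
    (fun a => X a (r a)) (fun a => Y (r a))

theorem Matrix.det_diagonal_mul_submatrix [DecidableEq n] (d : n → R) (Y : Matrix n k R)
    (r : k → n) :
    ((diagonal d * Y).submatrix r id).det = (∏ a, d (r a)) * (Y.submatrix r id).det := by
  rw [← det_mul_column]
  congr 1
  ext a b
  simp [diagonal_mul]

end DetExpansion

section PadicMatrix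

variable {p : ℕ} [Fact p.Prime]

lemma padicValT_det_map_coe_nonneg {k : Type*} [Fintype k] [DecidableEq k]
    (F : Matrix k k ℤ_[p]) : 0 ≤ padicValT p (F.map Coe.ringHom).det :=
  (RingHom.map_det Coe.ringHom F).symm ▸ padicValT_coe_nonneg _

lemma le_padicValT_det_map_mul_diagonal_mul_map {k n : Type*} [Fintype k] [DecidableEq k]
    [Fintype n] [DecidableEq n] (E : Matrix k n ℤ_[p]) (d : n → ℚ_[p]) (F : Matrix n k ℤ_[p])
    {c : WithTop ℤ} (hc : ∀ r : k → n, Function.Injective r → c ≤ ∑ a, padicValT p (d (r a))) :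
    c ≤ padicValT p (E.map Coe.ringHom * diagonal d * F.map Coe.ringHom).det := by
  rw [Matrix.mul_assoc, det_mul_eq_sum_prod_mul_det_submatrix]
  refine le_padicValT_sum fun r _ => ?_
  by_cases hr : Function.Injective r
  · have hE : 0 ≤ ∑ a, padicValT p (E a (r a) : ℚ_[p]) :=
      Finset.sum_nonneg fun a _ => padicValT_coe_nonneg _
    have hF := padicValT_det_map_coe_nonneg (F.submatrix r id)
    rw [det_diagonal_mul_submatrix, padicValT_mul, padicValT_mul]
    simp only [padicValT_prod]
    calc c = 0 + (c + 0) := by simp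
      _ ≤ _ := add_le_add hE (add_le_add (hc r hr) hF)
  · obtain ⟨a, b, hab, hne⟩ := Function.not_injective_iff.1 hr
    rw [det_zero_of_row_eq hne (by ext j; simp only [submatrix_apply, hab]), mul_zero]
    simp [padicValT]

end PadicMatrix

section RectDiag

variable {p : ℕ} [Fact p.Prime] {n m : ℕ} (f : ℕ → WithTop ℤ)

lemma rectDiag_mul {k : Type*} (h : n ≤ m) (X : Matrix (Fin m) k ℚ_[p]) :
    rectDiag p n m f * X =
      diagonal (fun i : Fin n => qppow p (f i)) * X.submatrix (Fin.castLE h) id := by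
  ext i b
  rw [mul_apply, Finset.sum_eq_single (Fin.castLE h i)]
  · simp [rectDiag, diagonal_mul]
  · intro j _ hj
    simp [rectDiag, show (i : ℕ) ≠ j from fun e => hj (Fin.ext e.symm)]
  · simp

lemma rectDiag_submatrix {k : Type*} [DecidableEq k] (h : n ≤ m) {e : k → Fin n}
    (he : Function.Injective e) :
    (rectDiag p n m f).submatrix e (Fin.castLE h ∘ e) = diagonal fun a => qppow p (f (e a)) := by
  ext a b
  simp [rectDiag, diagonal, Fin.val_eq_val, he.eq_iff]

end RectDiag

section DetValuations

variable {p : ℕ} [Fact p.Prime]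

variable (p) in
def detValuations (k : Type*) [Fintype k] [DecidableEq k] {n m : Type*} [Fintype n] [Fintype m]
    (A : Matrix n m ℚ_[p]) : Set (WithTop ℤ) :=
  {v | ∃ (C : Matrix k n ℤ_[p]) (D : Matrix m k ℤ_[p]),
    v = padicValT p ((C.map Coe.ringHom * A * D.map Coe.ringHom).det)}

variable {k : Type*} [Fintype k] [DecidableEq k]

lemma detValuations_map_mul_mul_subset {n n' m m' : Type*} [Fintype n] [Fintype n']
    [Fintype m] [Fintype m'] (X : Matrix n n' ℤ_[p]) (Y : Matrix m' m ℤ_[p])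
    (A : Matrix n' m' ℚ_[p]) :
    detValuations p k (X.map Coe.ringHom * A * Y.map Coe.ringHom) ⊆ detValuations p k A := by
  rintro v ⟨C, D, rfl⟩
  exact ⟨C * X, Y * D, by simp only [Matrix.map_mul, Matrix.mul_assoc]⟩

lemma detValuations_units_mul_mul {n m : Type*} [Fintype n] [DecidableEq n] [Fintype m]
    [DecidableEq m] (U : (Matrix n n ℤ_[p])ˣ) (V : (Matrix m m ℤ_[p])ˣ) (A : Matrix n m ℚ_[p]) :
    detValuations p k (U.val.map Coe.ringHom * A * V.val.map Coe.ringHom) =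
      detValuations p k A := by
  refine (detValuations_map_mul_mul_subset _ _ A).antisymm ?_
  have hA : A = (U⁻¹).val.map Coe.ringHom * (U.val.map Coe.ringHom * A * V.val.map Coe.ringHom) *
      (V⁻¹).val.map Coe.ringHom := by
    simp only [← Matrix.mul_assoc, ← Matrix.map_mul, Units.inv_mul]
    simp [Matrix.mul_assoc, ← Matrix.map_mul]
  conv_lhs => rw [hA]
  exact detValuations_map_mul_mul_subset _ _ _

lemma isLeast_detValuations_rectDiag {n m : ℕ} (f : ℕ → WithTop ℤ) (h : n ≤ m) {e : k → Fin n}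
    (he : Function.Injective e)
    (hmin : ∀ r : k → Fin n, Function.Injective r → ∑ a, f (e a) ≤ ∑ a, f (r a)) :
    IsLeast (detValuations p k (rectDiag p n m f)) (∑ a, f (e a)) := by
  constructor
  · refine ⟨(1 : Matrix (Fin n) (Fin n) ℤ_[p]).submatrix e id,
      (1 : Matrix (Fin m) (Fin m) ℤ_[p]).submatrix id (Fin.castLE h ∘ e), ?_⟩
    have hsub : ((1 : Matrix (Fin n) (Fin n) ℤ_[p]).submatrix e id).map Coe.ringHom *
        rectDiag p n m f *
        ((1 : Matrix (Fin m) (Fin m) ℤ_[p]).submatrix id (Fin.castLE h ∘ e)).map Coe.ringHom =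
        (rectDiag p n m f).submatrix e (Fin.castLE h ∘ e) := by
      ext a b
      simp [mul_apply, one_apply]
    rw [hsub, rectDiag_submatrix f h he, det_diagonal, padicValT_prod]
    simp only [padicValT_qppow]
  · rintro v ⟨C, D, rfl⟩
    rw [Matrix.mul_assoc, rectDiag_mul f h, ← Matrix.mul_assoc]
    exact le_padicValT_det_map_mul_diagonal_mul_map C _ (D.submatrix (Fin.castLE h) id)
      fun r hr => by simpa only [padicValT_qppow] using hmin r hr

end DetValuations

theorem statement0 (p : ℕ) [Fact p.Prime] (n m k : ℕ)
    (hn : 1 ≤ n) (hnm : n ≤ m) (hkn : k ≤ n)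
    (A : Matrix (Fin n) (Fin m) ℚ_[p]) (s : Fin (min n m) → WithTop ℤ)
    (hs : IsSN p n m A s) :
    IsLeast
      {v : WithTop ℤ |
        ∃ (C : Matrix (Fin k) (Fin n) ℤ_[p]) (D : Matrix (Fin m) (Fin k) ℤ_[p]),
          v = padicValT p
            ((C.map (fun x : ℤ_[p] => (x : ℚ_[p])) * A *
              D.map (fun x : ℤ_[p] => (x : ℚ_[p]))).det)}
      (∑ j ∈ Finset.range k, s ⟨n - 1 - j, by omega⟩) := by
  obtain ⟨hanti, U, V, rfl⟩ := hs
  set f : ℕ → WithTop ℤ := fun i => if h : i < min n m then s ⟨i, h⟩ else ⊤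
  have hf : ∀ i : Fin n, f i = s ⟨i, by omega⟩ := fun i => dif_pos _
  have hsum : ∑ j ∈ Finset.range k, s ⟨n - 1 - j, by omega⟩ =
      ∑ j : Fin k, f (Fin.rev (Fin.castLE hkn j)) := by
    rw [← Fin.sum_univ_eq_sum_range]
    refine Finset.sum_congr rfl fun j _ => ?_
    rw [hf]
    congr 2
    simp only [Fin.val_rev, Fin.val_castLE]
    omega
  have hf_anti : Antitone fun i : Fin n => f i := fun i j hij => by
    simpa only [hf] using hanti (Fin.mk_le_mk.2 hij)
  have hleast := isLeast_detValuations_rectDiag (p := p) f hnm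
    (Fin.rev_injective.comp (Fin.castLE_injective hkn)) fun r hr => hf_anti.sum_rev_castLE_le hkn hr
  rw [← detValuations_units_mul_mul U V] at hleast
  rwa [hsum]
end
end

section
/- Fix t ∈ (0,1). For each i ∈ ℤ let P_i be the law on (ℝ_{≥0})^ℕ of an iid sequence of exponential random variables of rate t^i (density t^i·e^{−t^i x} on ℝ_{≥0}), and let P := ∏_{i∈ℤ} P_i be the product probability measure on Ω := ∏_{i∈ℤ} (ℝ_{≥0})^ℕ. For T ≥ 0 and a = (a_1,a_2,…) ∈ (ℝ_{≥0})^ℕ define jumps(T,a) := sup{n ≥ 0 : a_1 + … + a_n ≤ T}. Then the set of ω ∈ Ω such that Σ_{j=i}^∞ jumps(T, ω_j) < ∞ for every T ≥ 0 and every i ∈ ℤ has P-measure 1. -/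
/-!
Almost surely all coordinates are nonnegative and every sequence `ω j` is unbounded, so each
`jumps T (ω j)` is finite. Since `P(ω j 0 ≤ N) ≤ N tʲ` is summable over `j ≥ 0`, Borel–Cantelli
gives `ω j 0 → ∞` almost surely; once `ω j 0 > T` the walk `ω j` makes no jump before time `T`,
so the sum over `j ≥ i` has only finitely many nonzero terms.
-/

open MeasureTheory Filter ProbabilityTheory
open scoped ENNReal

noncomputable section

def expLaw (rate : ℝ) : Measure ℝ :=
  volume.withDensity fun x => ENNReal.ofReal (if 0 ≤ x then rate * Real.exp (-(rate * x)) else 0)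

/-- Indices start at `0`: `a 0 + … + a (n-1)` is the paper's `a_1 + … + a_n`. -/
def jumps (T : ℝ) (a : ℕ → ℝ) : ℝ≥0∞ :=
  ⨆ (n : ℕ) (_ : ∑ k ∈ Finset.range n, a k ≤ T), (n : ℝ≥0∞)

lemma expLaw_eq_withDensity_exponentialPDF (r : ℝ) :
    expLaw r = volume.withDensity (exponentialPDF r) := by
  refine congrArg volume.withDensity (funext fun x => ?_)
  exact (exponentialPDF_eq r x).symm

lemma expLaw_apply (r : ℝ) {s : Set ℝ} (hs : MeasurableSet s) :
    expLaw r s = ∫⁻ x in s, exponentialPDF r x := by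
  rw [expLaw_eq_withDensity_exponentialPDF, withDensity_apply _ hs]

lemma expLaw_Iio_zero (r : ℝ) : expLaw r (Set.Iio 0) = 0 := by
  rw [expLaw_apply r measurableSet_Iio]
  exact lintegral_exponentialPDF_of_nonpos le_rfl

lemma expLaw_Iic {r : ℝ} (hr : 0 < r) (x : ℝ) :
    expLaw r (Set.Iic x) = ENNReal.ofReal (if 0 ≤ x then 1 - Real.exp (-(r * x)) else 0) := by
  rw [expLaw_apply r measurableSet_Iic, lintegral_exponentialPDF_eq_antiDeriv hr x]

lemma expLaw_Iic_lt_one {r : ℝ} (hr : 0 < r) (x : ℝ) : expLaw r (Set.Iic x) < 1 := by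
  rw [expLaw_Iic hr x, ENNReal.ofReal_lt_one]
  split_ifs
  · linarith [Real.exp_pos (-(r * x))]
  · exact zero_lt_one

lemma expLaw_Iic_le {r : ℝ} (hr : 0 < r) {x : ℝ} (hx : 0 ≤ x) :
    expLaw r (Set.Iic x) ≤ ENNReal.ofReal (r * x) := by
  rw [expLaw_Iic hr x, if_pos hx]
  exact ENNReal.ofReal_le_ofReal (by linarith [Real.add_one_le_exp (-(r * x))])

section Jumps

variable {T : ℝ} {a : ℕ → ℝ}

lemma jumps_le_of_lt (ha : ∀ k, 0 ≤ a k) {m : ℕ} (hm : T < a m) : jumps T a ≤ m := by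
  refine iSup₂_le fun n hn => ?_
  by_contra! hmn
  have : a m ≤ ∑ k ∈ Finset.range n, a k :=
    Finset.single_le_sum (fun k _ => ha k) (Finset.mem_range.2 (by exact_mod_cast hmn))
  linarith

lemma jumps_lt_top (ha : ∀ k, 0 ≤ a k) (hunbdd : ¬BddAbove (Set.range a)) : jumps T a < ⊤ := by
  obtain ⟨_, ⟨m, rfl⟩, hm⟩ := not_bddAbove_iff.1 hunbdd T
  exact (jumps_le_of_lt ha hm).trans_lt (ENNReal.natCast_lt_top m)

lemma jumps_eq_zero (ha : ∀ k, 0 ≤ a k) (h0 : T < a 0) : jumps T a = 0 := by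
  simpa using jumps_le_of_lt ha h0

lemma tsum_jumps_lt_top {ω : ℤ → ℕ → ℝ} (hnonneg : ∀ j k, 0 ≤ ω j k)
    (hunbdd : ∀ j, ¬BddAbove (Set.range (ω j)))
    (htends : Tendsto (fun n : ℕ => ω n 0) atTop atTop) (T : ℝ) (i : ℤ) :
    ∑' j : {j : ℤ // i ≤ j}, jumps T (ω j) < ⊤ := by
  obtain ⟨n₀, hn₀⟩ := eventually_atTop.1 (htends.eventually_gt_atTop T)
  have hvanish : ∀ j : {j : ℤ // i ≤ j}, j ∉ (Finset.Icc i n₀).subtype (i ≤ ·) →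
      jumps T (ω j) = 0 := by
    rintro ⟨j, hij⟩ hj
    simp only [Finset.mem_subtype, Finset.mem_Icc, not_and, not_le] at hj
    have hn₀j := hj hij
    lift j to ℕ using by omega
    exact jumps_eq_zero (hnonneg j) (hn₀ j (by omega))
  rw [tsum_eq_sum hvanish]
  exact ENNReal.sum_lt_top.2 fun j _ => jumps_lt_top (hnonneg j) (hunbdd j)

end Jumps

def HasIndepExpCoords {ι : Type*} (rate : ι → ℝ) (P : Measure (ι → ℕ → ℝ)) : Prop :=
  ∀ s : Finset (ι × ℕ), ∀ B : ι × ℕ → Set ℝ, (∀ x ∈ s, MeasurableSet (B x)) →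
    P {ω | ∀ x ∈ s, ω x.1 x.2 ∈ B x} = ∏ x ∈ s, expLaw (rate x.1) (B x)

namespace HasIndepExpCoords

variable {ι : Type*} {rate : ι → ℝ} {P : Measure (ι → ℕ → ℝ)}

lemma measure_coord_mem (h : HasIndepExpCoords rate P) (j : ι) (k : ℕ) {B : Set ℝ}
    (hB : MeasurableSet B) : P {ω | ω j k ∈ B} = expLaw (rate j) B := by
  simpa using h {(j, k)} (fun _ => B) (fun _ _ => hB)

lemma measure_forall_lt_mem (h : HasIndepExpCoords rate P) (j : ι) (m : ℕ) {B : Set ℝ}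
    (hB : MeasurableSet B) : P {ω | ∀ k < m, ω j k ∈ B} = expLaw (rate j) B ^ m := by
  have := h ((Finset.range m).map (Function.Embedding.sectR j ℕ)) (fun _ => B) (fun _ _ => hB)
  simpa using this

lemma ae_nonneg [Countable ι] (h : HasIndepExpCoords rate P) : ∀ᵐ ω ∂P, ∀ j k, 0 ≤ ω j k := by
  refine ae_all_iff.2 fun j => ae_all_iff.2 fun k => ae_iff.2 ?_
  simpa [expLaw_Iio_zero] using h.measure_coord_mem j k (measurableSet_Iio (a := (0 : ℝ)))

lemma ae_not_bddAbove [Countable ι] (h : HasIndepExpCoords rate P) (hrate : ∀ j, 0 < rate j) :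
    ∀ᵐ ω ∂P, ∀ j, ¬BddAbove (Set.range (ω j)) := by
  have hN : ∀ j (N : ℕ), ∀ᵐ ω ∂P, ∃ k, (N : ℝ) < ω j k := by
    intro j N
    refine ae_iff.2 (le_antisymm ?_ bot_le)
    push Not
    have hbound : ∀ m, P {ω | ∀ k, ω j k ≤ N} ≤ expLaw (rate j) (Set.Iic N) ^ m := fun m =>
      (measure_mono (Set.ofPred_subset_ofPred.2 fun ω hω k _ => hω k)).trans_eq (h.measure_forall_lt_mem j m measurableSet_Iic)
    exact ge_of_tendsto' (ENNReal.tendsto_pow_atTop_nhds_zero_of_lt_one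
      (expLaw_Iic_lt_one (hrate j) _)) hbound
  filter_upwards [ae_all_iff.2 fun j => ae_all_iff.2 (hN j)] with ω hω j
  refine not_bddAbove_iff.2 fun x => ?_
  obtain ⟨k, hk⟩ := hω j ⌈x⌉₊
  exact ⟨ω j k, ⟨k, rfl⟩, (Nat.le_ceil x).trans_lt hk⟩

lemma ae_tendsto_atTop {rate : ℤ → ℝ} {P : Measure (ℤ → ℕ → ℝ)} (h : HasIndepExpCoords rate P)
    (hrate : ∀ j, 0 < rate j) (hsum : Summable fun n : ℕ => rate n) :
    ∀ᵐ ω ∂P, Tendsto (fun n : ℕ => ω n 0) atTop atTop := by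
  have hN : ∀ N : ℕ, ∀ᵐ ω ∂P, ∀ᶠ n : ℕ in atTop, ω n 0 ∉ Set.Iic (N : ℝ) := by
    intro N
    apply ae_eventually_notMem (s := fun n : ℕ => {ω : ℤ → ℕ → ℝ | ω n 0 ∈ Set.Iic (N : ℝ)})
    refine ne_top_of_le_ne_top ?_ (ENNReal.tsum_le_tsum fun n =>
      (h.measure_coord_mem _ 0 measurableSet_Iic).trans_le (expLaw_Iic_le (hrate n) N.cast_nonneg))
    rw [← ENNReal.ofReal_tsum_of_nonneg (fun n : ℕ => mul_nonneg (hrate n).le N.cast_nonneg)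
      (hsum.mul_right _)]
    exact ENNReal.ofReal_ne_top
  filter_upwards [ae_all_iff.2 hN] with ω hω
  refine tendsto_atTop.2 fun b => (hω ⌈b⌉₊).mono fun n hn => ?_
  exact (Nat.le_ceil b).trans (not_le.1 hn).le

end HasIndepExpCoords

theorem statement4 (t : ℝ) (ht0 : 0 < t) (ht1 : t < 1)
    (P : Measure (ℤ → ℕ → ℝ)) (hP : IsProbabilityMeasure P)
    (hcyl : ∀ s : Finset (ℤ × ℕ), ∀ B : ℤ × ℕ → Set ℝ, (∀ x ∈ s, MeasurableSet (B x)) →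
      P {ω | ∀ x ∈ s, ω x.1 x.2 ∈ B x} = ∏ x ∈ s, expLaw (t ^ x.1) (B x)) :
    P {ω | ∀ T : ℝ, 0 ≤ T → ∀ i : ℤ,
        (∑' j : {j : ℤ // i ≤ j}, jumps T (ω j.val)) < ⊤} = 1 := by
  have hexp : HasIndepExpCoords (fun j : ℤ => t ^ j) P := hcyl
  have hrate : ∀ j : ℤ, 0 < t ^ j := fun j => zpow_pos ht0 j
  have hsum : Summable fun n : ℕ => t ^ (n : ℤ) := by
    simpa only [zpow_natCast] using summable_geometric_of_lt_one ht0.le ht1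
  have hgood : ∀ᵐ ω ∂P, ∀ T : ℝ, 0 ≤ T → ∀ i : ℤ,
      (∑' j : {j : ℤ // i ≤ j}, jumps T (ω j.val)) < ⊤ := by
    filter_upwards [hexp.ae_nonneg, hexp.ae_not_bddAbove hrate, hexp.ae_tendsto_atTop hrate hsum]
      with ω hnonneg hunbdd htends T _ i
    exact tsum_jumps_lt_top hnonneg hunbdd htends T i
  exact (measure_congr (ae_eq_univ.2 hgood)).trans hP.measure_univ
end
end

section
/- Let q be a prime power and 0 ≤ r ≤ k ≤ n integers. Then the number of n×k matrices over 𝔽_q of rank exactly r equals q^{rn + rk − r^2} · (q^{−1};q^{−1})_n · (q^{−1};q^{−1})_k / ((q^{−1};q^{−1})_r · (q^{−1};q^{−1})_{n−r} · (q^{−1};q^{−1})_{k−r}). -/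
/-!
Multiplication `(C, D) ↦ C * D` maps pairs of an `m × r` and an `r × n` matrix of rank `r` onto
the matrices of rank `r`, and each fibre is a torsor under `GL_r`, acting by
`(C, D) ↦ (C g, g⁻¹ D)`. Counting columns (resp. rows) as linearly independent `r`-tuples, the
number `N` of rank-`r` matrices satisfies
`N · ∏_{i<r} (q^r - q^i) = ∏_{i<r} (q^m - q^i) · ∏_{i<r} (q^n - q^i)`, and
`∏_{i<r} (q^m - q^i) = q^{rm} (q⁻¹;q⁻¹)_m / (q⁻¹;q⁻¹)_{m-r}` turns this into the stated formula.
-/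

noncomputable section

/-- The `t`-Pochhammer symbol `(t;t)_n = ∏_{i=1}^n (1 - tⁱ)`. -/
def tPoch (t : ℝ) (n : ℕ) : ℝ := ∏ i ∈ Finset.range n, (1 - t ^ (i + 1))

open Module

namespace Matrix

theorem eq_of_mul_eq_mul_of_mul_eq_one {R : Type*} [Semiring R] {l o p : Type*} [Fintype l]
    [Fintype o] [DecidableEq o] {L : Matrix o l R} {C : Matrix l o R} (hL : L * C = 1)
    {X Y : Matrix o p R} (h : C * X = C * Y) : X = Y := by
  rw [← Matrix.one_mul X, ← Matrix.one_mul Y, ← hL, Matrix.mul_assoc, Matrix.mul_assoc, h]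

variable {K : Type*} [Field K] {m n : Type*} {r : ℕ}

theorem exists_mul_eq_one_of_rank_eq_width [Fintype m] {C : Matrix m (Fin r) K}
    (hC : C.rank = r) : ∃ L : Matrix (Fin r) m K, L * C = 1 := by
  classical
  have hker : LinearMap.ker C.mulVecLin = ⊥ := by
    have := C.mulVecLin.finrank_range_add_finrank_ker
    rw [← rank, hC, finrank_fin_fun] at this
    exact Submodule.finrank_eq_zero.mp (by omega)
  obtain ⟨g, hg⟩ := C.mulVecLin.exists_leftInverse_of_injective hker
  refine ⟨LinearMap.toMatrix' g, ?_⟩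
  rw [← LinearMap.toMatrix'_toLin' C, ← LinearMap.toMatrix'_comp, toLin'_apply', hg,
    LinearMap.toMatrix'_id]

theorem exists_mul_eq_one_of_rank_eq_height [Fintype n] {D : Matrix (Fin r) n K}
    (hD : D.rank = r) : ∃ S : Matrix n (Fin r) K, D * S = 1 := by
  obtain ⟨L, hL⟩ := exists_mul_eq_one_of_rank_eq_width (D.rank_transpose.trans hD)
  exact ⟨Lᵀ, by rw [← transpose_transpose (D * Lᵀ), transpose_mul, transpose_transpose, hL,
    transpose_one]⟩

theorem rank_mul_eq_of_rank_eq [Fintype m] [Fintype n] {C : Matrix m (Fin r) K}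
    {D : Matrix (Fin r) n K} (hC : C.rank = r) (hD : D.rank = r) : (C * D).rank = r := by
  obtain ⟨L, hL⟩ := exists_mul_eq_one_of_rank_eq_width hC
  obtain ⟨S, hS⟩ := exists_mul_eq_one_of_rank_eq_height hD
  have h1 : L * (C * D) * S = 1 := by
    rw [← Matrix.mul_assoc, hL, Matrix.one_mul, hS]
  refine le_antisymm ((rank_mul_le_left C D).trans hC.le) ?_
  calc r = (L * (C * D) * S).rank := by rw [h1, rank_one, Fintype.card_fin]
    _ ≤ (L * (C * D)).rank := rank_mul_le_left _ _
    _ ≤ (C * D).rank := rank_mul_le_right _ _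

theorem rank_eq_of_mul_eq [Fintype n] {B : Matrix m n K} {C : Matrix m (Fin r) K}
    {D : Matrix (Fin r) n K} (hB : B.rank = r) (h : C * D = B) : C.rank = r ∧ D.rank = r := by
  subst h
  refine ⟨le_antisymm ?_ (hB.ge.trans (rank_mul_le_left C D)),
    le_antisymm ?_ (hB.ge.trans (rank_mul_le_right C D))⟩
  · simpa using C.rank_le_card_width
  · simpa using D.rank_le_card_height

theorem exists_mul_eq_of_rank_eq [Fintype n] {B : Matrix m n K} (hB : B.rank = r) :
    ∃ (C : Matrix m (Fin r) K) (D : Matrix (Fin r) n K), C * D = B := by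
  classical
  let e : LinearMap.range B.mulVecLin ≃ₗ[K] (Fin r → K) :=
    LinearEquiv.ofFinrankEq _ _ (hB.trans (finrank_fin_fun K).symm)
  refine ⟨LinearMap.toMatrix' ((LinearMap.range B.mulVecLin).subtype ∘ₗ e.symm.toLinearMap),
    LinearMap.toMatrix' (e.toLinearMap ∘ₗ B.mulVecLin.rangeRestrict), ?_⟩
  have hfac : ((LinearMap.range B.mulVecLin).subtype ∘ₗ e.symm.toLinearMap) ∘ₗ
      (e.toLinearMap ∘ₗ B.mulVecLin.rangeRestrict) = B.mulVecLin := by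
    ext; simp
  rw [← LinearMap.toMatrix'_comp, hfac, ← toLin'_apply', LinearMap.toMatrix'_toLin']

def mulOfRankEq [Fintype m] [Fintype n] :
    {C : Matrix m (Fin r) K // C.rank = r} × {D : Matrix (Fin r) n K // D.rank = r} →
      {B : Matrix m n K // B.rank = r} :=
  fun x => ⟨x.1.1 * x.2.1, rank_mul_eq_of_rank_eq x.1.2 x.2.2⟩

theorem exists_GL_of_mul_eq_mul [Fintype m] [Fintype n] {C C₀ : Matrix m (Fin r) K}
    {D D₀ : Matrix (Fin r) n K} (hC₀ : C₀.rank = r) (hD : D.rank = r) (hD₀ : D₀.rank = r)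
    (h : C * D = C₀ * D₀) :
    ∃ g : GL (Fin r) K, C₀ * (g : Matrix (Fin r) (Fin r) K) = C ∧
      ((g⁻¹ : GL (Fin r) K) : Matrix (Fin r) (Fin r) K) * D₀ = D := by
  obtain ⟨L₀, hL₀⟩ := exists_mul_eq_one_of_rank_eq_width hC₀
  obtain ⟨S, hS⟩ := exists_mul_eq_one_of_rank_eq_height hD
  obtain ⟨S₀, hS₀⟩ := exists_mul_eq_one_of_rank_eq_height hD₀
  -- right inverses of `D` and `D₀` give the transition matrices `D₀ S` and `D S₀`
  have hg : C₀ * (D₀ * S) = C := by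
    rw [← Matrix.mul_assoc, ← h, Matrix.mul_assoc, hS, Matrix.mul_one]
  have hh : C * (D * S₀) = C₀ := by
    rw [← Matrix.mul_assoc, h, Matrix.mul_assoc, hS₀, Matrix.mul_one]
  have hgh : D₀ * S * (D * S₀) = 1 := eq_of_mul_eq_mul_of_mul_eq_one hL₀ <| by
    rw [← Matrix.mul_assoc, hg, hh, Matrix.mul_one]
  have hgD : D₀ * S * D = D₀ := eq_of_mul_eq_mul_of_mul_eq_one hL₀ <| by
    rw [← Matrix.mul_assoc, hg, h]
  refine ⟨⟨D₀ * S, D * S₀, hgh, mul_eq_one_comm.mp hgh⟩, hg, ?_⟩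
  change D * S₀ * D₀ = D
  rw [← hgD, ← Matrix.mul_assoc (D * S₀), mul_eq_one_comm.mp hgh, Matrix.one_mul]

theorem nonempty_fiber_mulOfRankEq_equiv_GL [Fintype m] [Fintype n]
    (B : {B : Matrix m n K // B.rank = r}) :
    Nonempty ({x // mulOfRankEq x = B} ≃ GL (Fin r) K) := by
  obtain ⟨C₀, D₀, hB⟩ := exists_mul_eq_of_rank_eq B.2
  obtain ⟨hC₀, hD₀⟩ := rank_eq_of_mul_eq B.2 hB
  obtain ⟨L₀, hL₀⟩ := exists_mul_eq_one_of_rank_eq_width hC₀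
  let φ : GL (Fin r) K → {x // mulOfRankEq x = B} := fun g =>
    ⟨(⟨C₀ * (g : Matrix (Fin r) (Fin r) K), by
        rw [rank_mul_eq_left_of_isUnit_det _ _ (isUnits_det_units g), hC₀]⟩,
      ⟨((g⁻¹ : GL (Fin r) K) : Matrix (Fin r) (Fin r) K) * D₀, by
        rw [rank_mul_eq_right_of_isUnit_det _ _ (isUnits_det_units _), hD₀]⟩),
      Subtype.ext <| by
        simp only [mulOfRankEq]
        rw [Matrix.mul_assoc, ← Matrix.mul_assoc (g : Matrix (Fin r) (Fin r) K), Units.mul_inv,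
          Matrix.one_mul, hB]⟩
  refine ⟨(Equiv.ofBijective φ ⟨fun g g' hgg' => ?_, fun ⟨⟨⟨C, _⟩, ⟨D, hD⟩⟩, hx⟩ => ?_⟩).symm⟩
  · exact Units.ext <| eq_of_mul_eq_mul_of_mul_eq_one hL₀ <|
      congrArg (fun x : {x // mulOfRankEq x = B} => x.1.1.1) hgg'
  · obtain ⟨g, hgC, hgD⟩ :=
      exists_GL_of_mul_eq_mul hC₀ hD hD₀ ((congrArg Subtype.val hx).trans hB.symm)
    exact ⟨g, Subtype.ext (Prod.ext (Subtype.ext hgC) (Subtype.ext hgD))⟩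

theorem card_rank_eq_mul_card_GL [Fintype m] [Fintype n] :
    Nat.card {B : Matrix m n K // B.rank = r} * Nat.card (GL (Fin r) K) =
      Nat.card {C : Matrix m (Fin r) K // C.rank = r} *
        Nat.card {D : Matrix (Fin r) n K // D.rank = r} := by
  rw [← Nat.card_prod, ← Nat.card_prod]
  exact Nat.card_congr <| (Equiv.sigmaEquivProd _ _).symm.trans <|
    (Equiv.sigmaCongrRight fun B => (nonempty_fiber_mulOfRankEq_equiv_GL B).some.symm).trans
      (Equiv.sigmaFiberEquiv mulOfRankEq)

theorem card_rank_eq_width [Fintype m] [Fintype K] (h : r ≤ Fintype.card m) :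
    Nat.card {C : Matrix m (Fin r) K // C.rank = r} =
      ∏ i : Fin r, (Fintype.card K ^ Fintype.card m - Fintype.card K ^ (i : ℕ)) := by
  have hcols : {C : Matrix m (Fin r) K // C.rank = r} ≃
      {s : Fin r → m → K // LinearIndependent K s} :=
    (transposeAddEquiv m (Fin r) K).toEquiv.subtypeEquiv fun C => by
      change _ ↔ LinearIndependent K C.col
      rw [rank_eq_finrank_span_cols, linearIndependent_iff_card_eq_finrank_span, Fintype.card_fin,
        Set.finrank, eq_comm]
  rw [Nat.card_congr hcols, card_linearIndependent (by rwa [finrank_fintype_fun_eq_card]),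
    finrank_fintype_fun_eq_card]

theorem card_rank_eq_height [Fintype n] [Fintype K] (h : r ≤ Fintype.card n) :
    Nat.card {D : Matrix (Fin r) n K // D.rank = r} =
      ∏ i : Fin r, (Fintype.card K ^ Fintype.card n - Fintype.card K ^ (i : ℕ)) := by
  rw [← card_rank_eq_width h]
  exact Nat.card_congr <| (transposeAddEquiv (Fin r) n K).toEquiv.subtypeEquiv fun D => by
    rw [← rank_transpose D]; rfl

theorem card_rank_eq_mul_prod [Fintype m] [Fintype n] [Fintype K] (hm : r ≤ Fintype.card m)
    (hn : r ≤ Fintype.card n) :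
    Nat.card {B : Matrix m n K // B.rank = r} *
        ∏ i : Fin r, (Fintype.card K ^ r - Fintype.card K ^ (i : ℕ)) =
      (∏ i : Fin r, (Fintype.card K ^ Fintype.card m - Fintype.card K ^ (i : ℕ))) *
        ∏ i : Fin r, (Fintype.card K ^ Fintype.card n - Fintype.card K ^ (i : ℕ)) := by
  rw [← card_GL_field, ← card_rank_eq_width hm, ← card_rank_eq_height hn, card_rank_eq_mul_card_GL]

end Matrix

open Finset

theorem tPoch_pos {t : ℝ} (h₀ : 0 ≤ t) (h₁ : t < 1) (n : ℕ) : 0 < tPoch t n :=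
  prod_pos fun i _ => sub_pos.mpr (pow_lt_one₀ h₀ h₁ i.succ_ne_zero)

theorem prod_pow_sub_pow_mul_tPoch {x : ℝ} (hx : x ≠ 0) {r m : ℕ} (h : r ≤ m) :
    (∏ i ∈ range r, (x ^ m - x ^ i)) * tPoch x⁻¹ (m - r) = x ^ (r * m) * tPoch x⁻¹ m := by
  obtain ⟨a, rfl⟩ : ∃ a, m = a + r := ⟨m - r, by omega⟩
  have hfactor : ∀ j ∈ range r, x ^ (a + r) - x ^ (r - 1 - j) =
      x ^ (a + r) * (1 - x⁻¹ ^ (a + j + 1)) := by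
    intro j hj
    have hexp : a + r = (r - 1 - j) + (a + j + 1) := by
      have := mem_range.mp hj; omega
    rw [mul_sub, mul_one, hexp, pow_add, inv_pow, mul_assoc, mul_inv_cancel₀ (pow_ne_zero _ hx),
      mul_one]
  rw [Nat.add_sub_cancel, tPoch, tPoch, prod_range_add, ← prod_range_reflect,
    prod_congr rfl hfactor, prod_mul_distrib, prod_const, card_range, ← pow_mul]
  ring

theorem cast_prod_pow_sub_pow {q r m : ℕ} (hq : 0 < q) (h : r ≤ m) :
    ((∏ i : Fin r, (q ^ m - q ^ (i : ℕ)) : ℕ) : ℝ) =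
      ∏ i ∈ range r, ((q : ℝ) ^ m - (q : ℝ) ^ i) := by
  rw [Nat.cast_prod, Fin.prod_univ_eq_prod_range fun i => ((q ^ m - q ^ i : ℕ) : ℝ)]
  refine prod_congr rfl fun i hi => ?_
  rw [Nat.cast_sub (Nat.pow_le_pow_right hq ((mem_range.mp hi).le.trans h))]
  push_cast
  rfl

theorem cast_eq_of_mul_prod_pow_sub_pow_eq {q N n k r : ℕ} (hq : 1 < q) (hrn : r ≤ n)
    (hrk : r ≤ k) (h : N * ∏ i : Fin r, (q ^ r - q ^ (i : ℕ)) =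
      (∏ i : Fin r, (q ^ n - q ^ (i : ℕ))) * ∏ i : Fin r, (q ^ k - q ^ (i : ℕ))) :
    (N : ℝ) = (q : ℝ) ^ (r * n + r * k - r ^ 2) * (tPoch (q : ℝ)⁻¹ n * tPoch (q : ℝ)⁻¹ k) /
      (tPoch (q : ℝ)⁻¹ r * tPoch (q : ℝ)⁻¹ (n - r) * tPoch (q : ℝ)⁻¹ (k - r)) := by
  have hq₀ : (q : ℝ) ≠ 0 := by positivity
  replace h := congrArg (Nat.cast : ℕ → ℝ) h
  push_cast only [Nat.cast_mul] at h
  rw [cast_prod_pow_sub_pow (by omega) le_rfl, cast_prod_pow_sub_pow (by omega) hrn,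
    cast_prod_pow_sub_pow (by omega) hrk] at h
  have hPn := prod_pow_sub_pow_mul_tPoch hq₀ hrn
  have hPk := prod_pow_sub_pow_mul_tPoch hq₀ hrk
  have hPr := prod_pow_sub_pow_mul_tPoch hq₀ (le_refl r)
  rw [Nat.sub_self, tPoch, prod_range_zero, mul_one] at hPr
  have hexp : (q : ℝ) ^ (r * n + r * k - r ^ 2) * (q : ℝ) ^ (r * r) =
      (q : ℝ) ^ (r * n) * (q : ℝ) ^ (r * k) := by
    rw [← pow_add, ← pow_add, sq, Nat.sub_add_cancel (by nlinarith)]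
  have hT : ∀ j, 0 < tPoch (q : ℝ)⁻¹ j :=
    tPoch_pos (by positivity) (inv_lt_one_of_one_lt₀ (by exact_mod_cast hq))
  rw [eq_div_iff (mul_pos (mul_pos (hT r) (hT _)) (hT _)).ne',
    ← mul_left_inj' (pow_ne_zero (r * r) hq₀)]
  set T := tPoch (q : ℝ)⁻¹
  calc (N : ℝ) * (T r * T (n - r) * T (k - r)) * (q : ℝ) ^ (r * r)
      = N * (∏ i ∈ range r, ((q : ℝ) ^ r - (q : ℝ) ^ i)) * T (n - r) * T (k - r) := by
        rw [hPr]; ring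
    _ = ((∏ i ∈ range r, ((q : ℝ) ^ n - (q : ℝ) ^ i)) * T (n - r)) *
          ((∏ i ∈ range r, ((q : ℝ) ^ k - (q : ℝ) ^ i)) * T (k - r)) := by
        rw [h]; ring
    _ = (q : ℝ) ^ (r * n + r * k - r ^ 2) * (T n * T k) * (q : ℝ) ^ (r * r) := by
        rw [hPn, hPk]; linear_combination (-(T n * T k)) * hexp

theorem statement15 (F : Type) [Field F] [Fintype F] (q : ℕ) (hq : q = Fintype.card F)
    (n k r : ℕ) (hrk : r ≤ k) (hkn : k ≤ n) :
    (Nat.card {B : Matrix (Fin n) (Fin k) F // B.rank = r} : ℝ) =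
      (q : ℝ) ^ (r * n + r * k - r ^ 2) *
        (tPoch (q : ℝ)⁻¹ n * tPoch (q : ℝ)⁻¹ k) /
        (tPoch (q : ℝ)⁻¹ r * tPoch (q : ℝ)⁻¹ (n - r) * tPoch (q : ℝ)⁻¹ (k - r)) := by
  have hrn : r ≤ n := hrk.trans hkn
  subst hq
  refine cast_eq_of_mul_prod_pow_sub_pow_eq Fintype.one_lt_card hrn hrk ?_
  simpa only [Fintype.card_fin] using
    Matrix.card_rank_eq_mul_prod (K := F) (m := Fin n) (n := Fin k) (by simpa using hrn)
      (by simpa using hrk)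
end
end

section
/- Let q be a prime power and N, D positive integers. (1) If A is the top-left N×N submatrix of a uniformly random element of GL_{N+D}(𝔽_q), then E[q^{corank(A)}] = (1 − q^{−D} + 1 − q^{−N})/(1 − q^{−N−D}); equivalently, E[#ker(A)] equals this value, since #ker(A) = q^{corank(A)}. (2) If instead A is uniformly distributed on Mat_N(𝔽_q), then E[q^{corank(A)}] = 2 − q^{−N}. -/
/-!
Both averages come from double counting the pairs `(A, v)` with `A v = 0`: the sum of `#ker A`
over `A` is the sum over `v` of the number of `A` killing `v`. For a uniform matrix and `v ≠ 0`,
`M ↦ M v` is a surjective linear map, so a fraction `q^{-N}` of all matrices kill `v`. For the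
corner `A` of `g ∈ GL_{N+D}`, `A v = 0` says that `g (v, 0)` lies in the subspace of vectors
vanishing on the first `N` coordinates; since `GL_{N+D}` acts transitively on nonzero vectors,
`g (v, 0)` is uniform among the `q^{N+D} - 1` nonzero vectors, `q^D - 1` of which lie in that
subspace.
-/

open Matrix MulAction Function

theorem LinearMap.natCard_ker_mul_natCard_of_surjective {R M N : Type*} [Ring R] [AddCommGroup M]
    [AddCommGroup N] [Module R M] [Module R N] (f : M →ₗ[R] N) (hf : Surjective f) :
    Nat.card (ker f) * Nat.card N = Nat.card M := by
  rw [Submodule.card_eq_card_quotient_mul_card (ker f),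
    Nat.card_congr (f.quotKerEquivOfSurjective hf).toEquiv]

theorem Fintype.sum_eq_add_card_sub_one_smul {V M : Type*} [Fintype V] [DecidableEq V] [Zero V]
    [AddCommMonoid M] (f : V → M) (c : M) (h : ∀ v ≠ 0, f v = c) :
    ∑ v, f v = f 0 + (Fintype.card V - 1) • c := by
  rw [Fintype.sum_eq_add_sum_compl 0, Finset.sum_congr rfl fun v hv => h v (by simpa using hv),
    Finset.sum_const, Finset.card_compl, Finset.card_singleton]

theorem Fintype.sum_natCard_subtype_comm {α β : Type*} [Fintype α] [Fintype β] (p : α → β → Prop) :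
    ∑ a, Nat.card {b // p a b} = ∑ b, Nat.card {a // p a b} := by
  classical
  simp only [Nat.card_eq_fintype_card, Fintype.card_subtype, Finset.card_filter]
  exact Finset.sum_comm

theorem Matrix.submatrix_mulVec_of_injective {R ι κ m : Type*} [NonUnitalNonAssocSemiring R]
    [Fintype ι] [Fintype κ]
    {e : ι → κ} (he : Injective e) (r : m → κ) (M : Matrix κ κ R) (v : ι → R) :
    M.submatrix r e *ᵥ v = (M *ᵥ extend e v 0) ∘ r := by
  ext i
  change ∑ j, M (r i) (e j) * v j = ∑ k, M (r i) k * extend e v 0 k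
  rw [← Finset.sum_subset (Finset.subset_univ (Finset.univ.map ⟨e, he⟩)), Finset.sum_map]
  · simp [he.extend_apply]
  · intro k _ hk
    rw [extend_apply' _ _ _ (by simpa using hk), Pi.zero_apply, mul_zero]

theorem MulAction.natCard_smul_mem {G X : Type*} [Group G] [MulAction G X] (x : X) (S : Set X) :
    Nat.card {g : G // g • x ∈ S} = Nat.card ↥(S ∩ orbit G x) * Nat.card (stabilizer G x) := by
  choose r hr using fun y : ↥(S ∩ orbit G x) => mem_orbit_iff.1 y.2.2
  have hrs (y : ↥(S ∩ orbit G x)) (s : stabilizer G x) : (r y * s) • x = y := by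
    rw [mul_smul, mem_stabilizer_iff.1 s.2, hr]
  let p (g : {g : G // g • x ∈ S}) : ↥(S ∩ orbit G x) := ⟨g.1 • x, g.2, mem_orbit x g.1⟩
  rw [← Nat.card_prod]
  refine Nat.card_congr
    { toFun := fun g => (p g, ⟨(r (p g))⁻¹ * g, ?_⟩)
      invFun := fun y => ⟨r y.1 * y.2, by rw [hrs]; exact y.1.2.1⟩
      left_inv := fun g => by simp
      right_inv := fun y => ?_ }
  · rw [mem_stabilizer_iff, mul_smul, inv_smul_eq_iff, hr]
  · have hp : p ⟨r y.1 * y.2, by rw [hrs]; exact y.1.2.1⟩ = y.1 := Subtype.ext (hrs _ _)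
    ext <;> simp [hp]

theorem MulAction.natCard_smul_mem_mul_natCard_orbit {G X : Type*} [Group G] [MulAction G X]
    (x : X) (S : Set X) :
    Nat.card {g : G // g • x ∈ S} * Nat.card (orbit G x) =
      Nat.card ↥(S ∩ orbit G x) * Nat.card G := by
  rw [natCard_smul_mem, mul_assoc, mul_comm (Nat.card _) (Nat.card (orbit G x)), ← Nat.card_prod,
    Nat.card_congr (orbitProdStabilizerEquivGroup G x)]

theorem LinearMap.GeneralLinearGroup.orbit_eq_compl_zero {K V : Type*} [Field K] [AddCommGroup V]
    [Module K V] {v : V} (hv : v ≠ 0) :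
    orbit (LinearMap.GeneralLinearGroup K V) v = {0}ᶜ := by
  ext w
  refine ⟨?_, fun (hw : w ≠ 0) => ?_⟩
  · rintro ⟨g, rfl⟩
    exact (smul_ne_zero_iff_ne g).2 hv
  · let f := (LinearEquiv.toSpanNonzeroSingleton K V v hv).symm.trans
      (LinearEquiv.toSpanNonzeroSingleton K V w hw)
    obtain ⟨g, hg⟩ := Submodule.exists_linearEquiv_restrict_eq f
    refine ⟨LinearMap.GeneralLinearGroup.ofLinearEquiv g, ?_⟩
    have hgv := hg ⟨v, Submodule.mem_span_singleton_self v⟩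
    rw [LinearEquiv.trans_apply, show (LinearEquiv.toSpanNonzeroSingleton K V v hv).symm _ = 1 from
      LinearEquiv.coord_self K V v hv] at hgv
    simpa using hgv.symm

theorem Matrix.natCard_eq_pow {α m n : Type*} [Fintype α] [Fintype m] [Fintype n] :
    Nat.card (Matrix m n α) = Fintype.card α ^ (Fintype.card m * Fintype.card n) := by
  rw [show Nat.card (Matrix m n α) = Nat.card (m → n → α) from rfl, Nat.card_fun, Nat.card_fun,
    Nat.card_eq_fintype_card (α := α), Nat.card_eq_fintype_card (α := m),
    Nat.card_eq_fintype_card (α := n), ← pow_mul, mul_comm]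

section FiniteField

variable {F : Type*} [Field F] [Fintype F]

theorem Matrix.natCard_ker_mulVec {m n : Type*} [Fintype m] [Fintype n] (A : Matrix m n F) :
    Nat.card {v : n → F // A *ᵥ v = 0} = Fintype.card F ^ (Fintype.card n - A.rank) := by
  have h := LinearMap.finrank_range_add_finrank_ker A.mulVecLin
  rw [Module.finrank_fintype_fun_eq_card] at h
  change Nat.card (LinearMap.ker A.mulVecLin) = _
  rw [Module.natCard_eq_pow_finrank (K := F), Nat.card_eq_fintype_card, Matrix.rank]
  congr 1
  omega

theorem Matrix.natCard_mulVec_eq_zero_mul {m n : Type*} [Fintype m] [Fintype n]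
    {v : n → F} (hv : v ≠ 0) :
    Nat.card {M : Matrix m n F // M *ᵥ v = 0} * Fintype.card F ^ Fintype.card m =
      Fintype.card F ^ (Fintype.card m * Fintype.card n) := by
  classical
  let φ : Matrix m n F →ₗ[F] m → F :=
    { toFun := (· *ᵥ v)
      map_add' := fun A B => add_mulVec A B v
      map_smul' := fun c A => smul_mulVec c A v }
  obtain ⟨i, hi⟩ : ∃ i, v i ≠ 0 := by simpa [funext_iff] using hv
  have hφ : Surjective φ := fun w => ⟨vecMulVec w (Pi.single i (v i)⁻¹), by
    simp [φ, vecMulVec_mulVec, single_dotProduct, hi]⟩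
  have h := LinearMap.natCard_ker_mul_natCard_of_surjective φ hφ
  rw [Nat.card_fun, Matrix.natCard_eq_pow, Nat.card_eq_fintype_card (α := F),
    Nat.card_eq_fintype_card (α := m)] at h
  exact h

theorem LinearMap.natCard_ker_funLeft {ι κ : Type*} [Fintype ι] [Fintype κ] {e : ι → κ}
    (he : Injective e) :
    Nat.card (ker (funLeft F F e)) = Fintype.card F ^ (Fintype.card κ - Fintype.card ι) := by
  have h := natCard_ker_mul_natCard_of_surjective _ (funLeft_surjective_of_injective F F e he)
  rw [Nat.card_fun, Nat.card_fun, Nat.card_eq_fintype_card (α := F),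
    Nat.card_eq_fintype_card (α := ι), Nat.card_eq_fintype_card (α := κ),
    ← Nat.sub_add_cancel (Fintype.card_le_of_injective e he), pow_add] at h
  exact Nat.eq_of_mul_eq_mul_right (by positivity) h

theorem Matrix.GeneralLinearGroup.natCard_mulVec_mem_mul {n : Type*} [Fintype n] [DecidableEq n]
    {v : n → F} (hv : v ≠ 0) (S : Set (n → F)) :
    Nat.card {g : GL n F // (g : Matrix n n F) *ᵥ v ∈ S} * (Fintype.card F ^ Fintype.card n - 1) =
      Nat.card ↥(S \ {0}) * Nat.card (GL n F) := by
  have horbit : Nat.card (orbit (LinearMap.GeneralLinearGroup F (n → F)) v) =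
      Fintype.card F ^ Fintype.card n - 1 := by
    rw [LinearMap.GeneralLinearGroup.orbit_eq_compl_zero hv, Nat.card_coe_set_eq, Set.ncard_compl,
      Set.ncard_singleton, Nat.card_fun, Nat.card_eq_fintype_card (α := F),
      Nat.card_eq_fintype_card (α := n)]
  have hcongr : {g : GL n F // (g : Matrix n n F) *ᵥ v ∈ S} ≃
      {g : LinearMap.GeneralLinearGroup F (n → F) // g • v ∈ S} :=
    toLin.toEquiv.subtypeEquiv fun _ => Iff.rfl
  rw [← horbit, Nat.card_congr hcongr,
    natCard_smul_mem_mul_natCard_orbit, LinearMap.GeneralLinearGroup.orbit_eq_compl_zero hv,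
    Nat.card_congr toLin.toEquiv, Set.sdiff_eq]

theorem Matrix.GeneralLinearGroup.natCard_submatrix_mulVec_eq_zero_mul {ι κ : Type*} [Fintype ι]
    [Fintype κ] [DecidableEq κ] {e : ι → κ} (he : Injective e) {v : ι → F} (hv : v ≠ 0) :
    Nat.card {g : GL κ F // (g : Matrix κ κ F).submatrix e e *ᵥ v = 0} *
        (Fintype.card F ^ Fintype.card κ - 1) =
      (Fintype.card F ^ (Fintype.card κ - Fintype.card ι) - 1) * Nat.card (GL κ F) := by
  have hw : extend e v 0 ≠ 0 := fun h => hv <| funext fun i => by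
    simpa [he.extend_apply] using congrFun h (e i)
  let Z := LinearMap.ker (LinearMap.funLeft F F e)
  have hZ (g : GL κ F) :
      (g : Matrix κ κ F).submatrix e e *ᵥ v = 0 ↔
        (g : Matrix κ κ F) *ᵥ extend e v 0 ∈ (Z : Set _) := by
    rw [submatrix_mulVec_of_injective he]
    rfl
  rw [Nat.card_congr (Equiv.subtypeEquivRight hZ), natCard_mulVec_mem_mul hw, Nat.card_coe_set_eq,
    Set.ncard_sdiff_singleton_of_mem Z.zero_mem, ← Nat.card_coe_set_eq, SetLike.coe_sort_coe,
    LinearMap.natCard_ker_funLeft he]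

theorem Matrix.GeneralLinearGroup.sum_natCard_ker_submatrix_mul [DecidableEq F] {ι κ : Type*}
    [Fintype ι] [Fintype κ] [DecidableEq κ] {e : ι → κ} (he : Injective e) :
    (∑ g : GL κ F, Nat.card {v : ι → F // (g : Matrix κ κ F).submatrix e e *ᵥ v = 0}) *
        (Fintype.card F ^ Fintype.card κ - 1) =
      (Fintype.card F ^ Fintype.card κ - 1 + (Fintype.card F ^ Fintype.card ι - 1) *
        (Fintype.card F ^ (Fintype.card κ - Fintype.card ι) - 1)) * Nat.card (GL κ F) := by
  classical
  rw [Fintype.sum_natCard_subtype_comm, Finset.sum_mul,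
    Fintype.sum_eq_add_card_sub_one_smul _ _ fun v hv => natCard_submatrix_mulVec_eq_zero_mul he hv]
  simp only [mulVec_zero, Nat.card_subtype_true, Fintype.card_fun, smul_eq_mul]
  ring

theorem Matrix.sum_natCard_ker_mul {m n : Type*} [Fintype m] [Fintype n]
    [DecidableEq m] [DecidableEq n] :
    (∑ M : Matrix m n F, Nat.card {v : n → F // M *ᵥ v = 0}) * Fintype.card F ^ Fintype.card m =
      (Fintype.card F ^ Fintype.card m + (Fintype.card F ^ Fintype.card n - 1)) *
        Fintype.card F ^ (Fintype.card m * Fintype.card n) := by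
  classical
  rw [Fintype.sum_natCard_subtype_comm, Finset.sum_mul,
    Fintype.sum_eq_add_card_sub_one_smul _ _ fun v hv => natCard_mulVec_eq_zero_mul hv]
  simp only [mulVec_zero, Nat.card_subtype_true, Matrix.natCard_eq_pow, Fintype.card_fun,
    smul_eq_mul]
  ring

theorem Matrix.GeneralLinearGroup.average_pow_corank_submatrix [DecidableEq F] {ι κ : Type*}
    [Fintype ι] [Fintype κ] [DecidableEq κ] [Nonempty κ] {e : ι → κ} (he : Injective e) :
    (∑ g : GL κ F,
        (Fintype.card F : ℝ) ^ (Fintype.card ι - ((g : Matrix κ κ F).submatrix e e).rank)) /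
        Nat.card (GL κ F) =
      1 + ((Fintype.card F : ℝ) ^ Fintype.card ι - 1) *
        ((Fintype.card F : ℝ) ^ (Fintype.card κ - Fintype.card ι) - 1) /
        ((Fintype.card F : ℝ) ^ Fintype.card κ - 1) := by
  have hq : 1 ≤ Fintype.card F := Fintype.card_pos
  have hκ : (Fintype.card F : ℝ) ^ Fintype.card κ - 1 ≠ 0 :=
    sub_ne_zero.2 (one_lt_pow₀ (by exact_mod_cast Fintype.one_lt_card) Fintype.card_ne_zero).ne'
  have key := congrArg (Nat.cast : ℕ → ℝ) (sum_natCard_ker_submatrix_mul (F := F) he)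
  have hterm (A : Matrix ι ι F) :
      (Fintype.card F : ℝ) ^ (Fintype.card ι - A.rank) = Nat.card {v // A *ᵥ v = 0} := by
    rw [natCard_ker_mulVec]; push_cast; rfl
  simp only [hterm, ← Nat.cast_sum]
  push_cast [Nat.cast_sub (Nat.one_le_pow _ _ hq)] at key ⊢
  field_simp
  linear_combination key

theorem Matrix.average_pow_corank {m n : Type*} [Fintype m] [Fintype n] [DecidableEq m]
    [DecidableEq n] :
    (∑ M : Matrix m n F, (Fintype.card F : ℝ) ^ (Fintype.card n - M.rank)) /
        Nat.card (Matrix m n F) =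
      1 + ((Fintype.card F : ℝ) ^ Fintype.card n - 1) / (Fintype.card F : ℝ) ^ Fintype.card m := by
  have hq : 1 ≤ Fintype.card F := Fintype.card_pos
  have key := congrArg (Nat.cast : ℕ → ℝ) (sum_natCard_ker_mul (F := F) (m := m) (n := n))
  have hterm (A : Matrix m n F) :
      (Fintype.card F : ℝ) ^ (Fintype.card n - A.rank) = Nat.card {v // A *ᵥ v = 0} := by
    rw [natCard_ker_mulVec]; push_cast; rfl
  simp only [hterm, ← Nat.cast_sum, Matrix.natCard_eq_pow]
  push_cast [Nat.cast_sub (Nat.one_le_pow _ _ hq)] at key ⊢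
  field_simp
  linear_combination key

end FiniteField

theorem statement17 (F : Type) [Field F] [Fintype F] [DecidableEq F]
    (q : ℕ) (hq : q = Fintype.card F) (N D : ℕ) (hN : 1 ≤ N) :
    ((∑ g : (Matrix (Fin (N + D)) (Fin (N + D)) F)ˣ,
        (q : ℝ) ^ (N - ((g : Matrix (Fin (N + D)) (Fin (N + D)) F).submatrix
          (Fin.castLE (by omega)) (Fin.castLE (by omega)) : Matrix (Fin N) (Fin N) F).rank)) /
      (Nat.card (Matrix (Fin (N + D)) (Fin (N + D)) F)ˣ : ℝ) =
      (1 - ((q : ℝ)⁻¹) ^ D + 1 - ((q : ℝ)⁻¹) ^ N) / (1 - ((q : ℝ)⁻¹) ^ (N + D)))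
    ∧
    ((∑ M : Matrix (Fin N) (Fin N) F, (q : ℝ) ^ (N - M.rank)) /
        (Nat.card (Matrix (Fin N) (Fin N) F) : ℝ) = 2 - ((q : ℝ)⁻¹) ^ N) := by
  subst hq
  have hF : (1 : ℝ) < Fintype.card F := by exact_mod_cast Fintype.one_lt_card
  have : Nonempty (Fin (N + D)) := ⟨⟨0, by omega⟩⟩
  have hGL := GeneralLinearGroup.average_pow_corank_submatrix (F := F)
    (Fin.castLE_injective (by omega : N ≤ N + D))
  have hMat := Matrix.average_pow_corank (F := F) (m := Fin N) (n := Fin N)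
  simp only [Fintype.card_fin, add_tsub_cancel_left] at hGL hMat
  refine ⟨hGL.trans ?_, hMat.trans ?_⟩
  · have hND : (Fintype.card F : ℝ) ^ (N + D) ≠ 1 := (one_lt_pow₀ hF (by omega)).ne'
    have hND' : 1 - ((Fintype.card F : ℝ) ^ (N + D))⁻¹ ≠ 0 := by
      rwa [sub_ne_zero, ne_comm, inv_ne_one]
    rw [← sub_ne_zero] at hND
    simp only [inv_pow, pow_add] at hND hND' ⊢
    field_simp
    ring
  · simp only [inv_pow]
    field_simp
    ring
end
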